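/- arXiv:1508.07603 — 2 statements merged into one kernel-verified Lean document; each statement's English description precedes it below -/
import Mathlib

section
/- Let p, e, e′ be points of the Euclidean plane ℝ² satisfying: 0 ≤ e₁ − p₁ ≤ 1/2, e₂ − p₂ > √3/2, dist(e, e′) ≤ 1, and e′₂ ≤ p₂. Then there exists a point z on the closed segment from e to e′ with z₂ = p₂, dist(p, z) < 1, and dist(z, e′) < 1. -/
set_option maxHeartbeats 2000000


theorem stmt_2 (p e e' : EuclideanSpace ℝ (Fin 2))
    (hx0 : 0 ≤ e 0 - p 0) (hx1 : e 0 - p 0 ≤ 1 / 2)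
    (hy : e 1 - p 1 > Real.sqrt 3 / 2)
    (hstep : dist e e' ≤ 1) (hbelow : e' 1 ≤ p 1) :
    ∃ z ∈ segment ℝ e e', z 1 = p 1 ∧ dist p z < 1 ∧ dist z e' < 1 := by
  have h3 : (0:ℝ) < Real.sqrt 3 / 2 := by positivity
  have hsq3 : (Real.sqrt 3)^2 = 3 := Real.sq_sqrt (by norm_num)
  have hden : 0 < e 1 - e' 1 := by linarith
  set t : ℝ := (e 1 - p 1) / (e 1 - e' 1) with ht
  have ht0 : 0 < t := div_pos (by linarith) hden
  have ht1 : t ≤ 1 := by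
    rw [ht, div_le_one hden]; linarith
  have htm : t * (e 1 - e' 1) = e 1 - p 1 := by
    rw [ht]; field_simp
  set z : EuclideanSpace ℝ (Fin 2) := (1 - t) • e + t • e' with hz
  have hz0 : z 0 = (1 - t) * e 0 + t * e' 0 := by
    simp [hz, PiLp.add_apply, PiLp.smul_apply, smul_eq_mul]
  have hz1 : z 1 = p 1 := by
    have : z 1 = (1 - t) * e 1 + t * e' 1 := by
      simp [hz, PiLp.add_apply, PiLp.smul_apply, smul_eq_mul]
    rw [this]; linear_combination -htm
  -- sum bound from hstep
  have hdee' : dist e e' = Real.sqrt ((e 0 - e' 0)^2 + (e 1 - e' 1)^2) := by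
    rw [EuclideanSpace.dist_eq, Fin.sum_univ_two, Real.dist_eq, Real.dist_eq,
      sq_abs, sq_abs]
  have hsum : (e 0 - e' 0)^2 + (e 1 - e' 1)^2 ≤ 1 := by
    have h1 : dist e e' ^ 2 ≤ 1 := by nlinarith [dist_nonneg (x := e) (y := e')]
    rwa [hdee', Real.sq_sqrt (by positivity)] at h1
  have hvert : (e 1 - e' 1)^2 > 3/4 := by nlinarith
  have hhor : (e 0 - e' 0)^2 < 1/4 := by nlinarith
  have habs : |e 0 - e' 0| < 1/2 := by
    rw [abs_lt]; constructor <;> nlinarith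
  refine ⟨z, ⟨1 - t, t, by linarith, ht0.le, by ring, rfl⟩, hz1, ?_, ?_⟩
  · have hd : dist p z = Real.sqrt ((p 0 - z 0)^2 + (p 1 - z 1)^2) := by
      rw [EuclideanSpace.dist_eq, Fin.sum_univ_two, Real.dist_eq, Real.dist_eq,
        sq_abs, sq_abs]
    rw [hd, hz1, sub_self]
    have hlt : (p 0 - z 0)^2 + 0^2 < 1 := by
      rw [hz0]
      have h5 : |t * (e 0 - e' 0)| < 1/2 := by
        rw [abs_mul, abs_of_pos ht0]
        exact lt_of_le_of_lt (mul_le_of_le_one_left (abs_nonneg _) ht1) habs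
      obtain ⟨h6, h7⟩ := abs_lt.1 h5
      nlinarith [sq_nonneg (t * (e 0 - e' 0))]
    calc Real.sqrt ((p 0 - z 0)^2 + 0^2) < Real.sqrt 1 := by
          apply Real.sqrt_lt_sqrt (by positivity) hlt
      _ = 1 := Real.sqrt_one
  · have hd : dist z e' = Real.sqrt ((z 0 - e' 0)^2 + (z 1 - e' 1)^2) := by
      rw [EuclideanSpace.dist_eq, Fin.sum_univ_two, Real.dist_eq, Real.dist_eq,
        sq_abs, sq_abs]
    have h0 : z 0 - e' 0 = (1 - t) * (e 0 - e' 0) := by rw [hz0]; ring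
    have h1 : z 1 - e' 1 = (1 - t) * (e 1 - e' 1) := by
      rw [hz1]; linear_combination htm
    have hlt : (z 0 - e' 0)^2 + (z 1 - e' 1)^2 < 1 := by
      rw [h0, h1]
      have h1t : (1 - t)^2 < 1 := by nlinarith
      have h8 : (1-t)^2 * ((e 0 - e' 0)^2 + (e 1 - e' 1)^2) ≤ (1-t)^2 * 1 :=
        mul_le_mul_of_nonneg_left hsum (sq_nonneg _)
      nlinarith [h8, h1t]
    rw [hd]
    calc Real.sqrt ((z 0 - e' 0)^2 + (z 1 - e' 1)^2) < Real.sqrt 1 :=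
          Real.sqrt_lt_sqrt (by positivity) hlt
      _ = 1 := Real.sqrt_one
end

section
/- Let p, z, e be points of the Euclidean plane ℝ² with p₂ = z₂, dist(p, z) ≤ 1/2, dist(p, e) ≥ 1, and e₂ − z₂ ≥ √3 · |e₁ − z₁|. Then there exists a point w on the closed segment from z to e such that dist(p, w) = 1 and w₂ − p₂ ≥ √3 · (√13 − 1)/8, and hence w₂ − p₂ > 7/22. -/
lemma dist_two (x y : EuclideanSpace ℝ (Fin 2)) :
    dist x y = Real.sqrt ((x 0 - y 0)^2 + (x 1 - y 1)^2) := by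
  rw [EuclideanSpace.dist_eq]
  simp [Fin.sum_univ_two, Real.dist_eq, sq_abs]

lemma key_ineq (a b h s r : ℝ) (hs : s^2 = 3) (hs0 : 0 < s) (hr : r^2 = 13) (hr0 : 0 < r)
    (ha : a^2 ≤ 1/4) (hb : 3*b^2 ≤ h^2) (hh : 0 ≤ h) (heq : (a+b)^2 + h^2 = 1) :
    h ≥ s*(r-1)/8 := by
  have habs1 : |a| ≤ 1/2 := by
    rw [abs_le]; constructor <;> nlinarith [sq_nonneg (a - 1/2), sq_nonneg (a + 1/2)]
  have habs2 : s * |b| ≤ h := by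
    nlinarith [abs_nonneg b, sq_abs b, sq_nonneg (s * |b| - h), sq_nonneg (s * |b| + h)]
  have hab : 2*s*(a*b) ≤ h := by
    have h1 : a*b ≤ |a| * |b| := by rw [← abs_mul]; exact le_abs_self _
    have h2 : |a| * |b| ≤ (1/2) * |b| := mul_le_mul_of_nonneg_right habs1 (abs_nonneg b)
    nlinarith [mul_le_mul_of_nonneg_left (h1.trans h2) (by positivity : (0:ℝ) ≤ 2*s)]
  have hr1 : 1 < r := by nlinarith
  have step : (3/4)*s ≤ h + (4/3)*s*h^2 := by
    nlinarith [mul_le_mul_of_nonneg_left ha hs0.le, mul_le_mul_of_nonneg_left hb hs0.le]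
  have hs2h : s^2 * h^2 = 3 * h^2 := by rw [hs]
  have hmain : 16*h^2 + 4*s*h ≥ 9 := by
    nlinarith [mul_le_mul_of_nonneg_left step hs0.le, hs, hs2h]
  by_contra hcon
  push_neg at hcon
  have hcpos : 0 < s*(r-1)/8 := by
    apply div_pos (mul_pos hs0 (by linarith)) (by norm_num)
  have hc2 : h^2 < (s*(r-1)/8)^2 := by nlinarith
  have hcs : 4*s*h < 4*s*(s*(r-1)/8) :=
    mul_lt_mul_of_pos_left hcon (by positivity)
  have hcval : 16*(s*(r-1)/8)^2 + 4*s*(s*(r-1)/8) = 9 := by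
    linear_combination ((r^2-1)/4) * hs + (3/4) * hr
  linarith

set_option maxHeartbeats 1000000 in
theorem stmt_10 (p z e : EuclideanSpace ℝ (Fin 2))
    (hpz : p 1 = z 1) (hdz : dist p z ≤ 1 / 2) (hpe : dist p e ≥ 1)
    (hslope : e 1 - z 1 ≥ Real.sqrt 3 * |e 0 - z 0|) :
    ∃ w ∈ segment ℝ z e, dist p w = 1 ∧
      w 1 - p 1 ≥ Real.sqrt 3 * (Real.sqrt 13 - 1) / 8 ∧
      w 1 - p 1 > 7 / 22 := by
  have hs : (Real.sqrt 3)^2 = 3 := Real.sq_sqrt (by norm_num)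
  have hs0 : 0 < Real.sqrt 3 := Real.sqrt_pos.mpr (by norm_num)
  have hr : (Real.sqrt 13)^2 = 13 := Real.sq_sqrt (by norm_num)
  have hr0 : 0 < Real.sqrt 13 := Real.sqrt_pos.mpr (by norm_num)
  -- find w by IVT
  have hfc : Continuous (fun t : ℝ => dist p ((1-t) • z + t • e)) := by
    exact Continuous.dist continuous_const
      (((continuous_const.sub continuous_id).smul continuous_const).add
        (continuous_id.smul continuous_const))
  have hsub := intermediate_value_Icc (by norm_num : (0:ℝ) ≤ 1) hfc.continuousOn
  have h1mem : (1:ℝ) ∈ Set.Icc (dist p ((1-(0:ℝ)) • z + (0:ℝ) • e))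
      (dist p ((1-(1:ℝ)) • z + (1:ℝ) • e)) := by
    simp only [sub_zero, one_smul, zero_smul, add_zero, sub_self, zero_add]
    exact ⟨by linarith, by linarith⟩
  obtain ⟨t, ⟨ht0, ht1⟩, hft⟩ := hsub h1mem
  have hft' : dist p ((1-t) • z + t • e) = 1 := hft
  refine ⟨(1-t) • z + t • e, ⟨1-t, t, by linarith, ht0, by ring, rfl⟩, hft', ?_⟩
  set w : EuclideanSpace ℝ (Fin 2) := (1-t) • z + t • e with hw_def
  -- coordinates
  have hw0 : w 0 = (1-t) * z 0 + t * e 0 := rfl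
  have hw1 : w 1 = (1-t) * z 1 + t * e 1 := rfl
  -- squared distance facts
  have hdzsq : (p 0 - z 0)^2 ≤ 1/4 := by
    rw [dist_two, hpz] at hdz
    have hS : (0:ℝ) ≤ (p 0 - z 0)^2 + (z 1 - z 1)^2 := by positivity
    nlinarith [Real.sq_sqrt hS, Real.sqrt_nonneg ((p 0 - z 0)^2 + (z 1 - z 1)^2)]
  have hdwsq : (p 0 - w 0)^2 + (p 1 - w 1)^2 = 1 := by
    rw [dist_two] at hft'
    have hS : (0:ℝ) ≤ (p 0 - w 0)^2 + (p 1 - w 1)^2 := by positivity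
    rw [← Real.sq_sqrt hS, hft']; norm_num
  -- slope facts
  have hez1 : 0 ≤ e 1 - z 1 := le_trans (by positivity) hslope
  have hsq_slope : 3 * (e 0 - z 0)^2 ≤ (e 1 - z 1)^2 := by
    have h3 : (Real.sqrt 3 * |e 0 - z 0|)^2 = 3*(e 0 - z 0)^2 := by
      rw [mul_pow, hs, sq_abs]
    nlinarith [mul_self_le_mul_self (by positivity : (0:ℝ) ≤ Real.sqrt 3 * |e 0 - z 0|) hslope, h3]
  -- set up key inequality
  have hhval : w 1 - p 1 = t * (e 1 - z 1) := by rw [hw1, hpz]; ring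
  have hh : 0 ≤ w 1 - p 1 := by rw [hhval]; positivity
  have hb : 3 * (z 0 - w 0)^2 ≤ (w 1 - p 1)^2 := by
    have hzw : z 0 - w 0 = -(t * (e 0 - z 0)) := by rw [hw0]; ring
    rw [hzw, hhval]
    nlinarith [mul_le_mul_of_nonneg_left hsq_slope (sq_nonneg t)]
  have heq : ((p 0 - z 0) + (z 0 - w 0))^2 + (w 1 - p 1)^2 = 1 := by
    linear_combination hdwsq
  have hkey := key_ineq (p 0 - z 0) (z 0 - w 0) (w 1 - p 1) _ _ hs hs0 hr hr0
    hdzsq hb hh heq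
  refine ⟨by linarith, ?_⟩
  have hs17 : (1.7:ℝ) < Real.sqrt 3 := by
    nlinarith [hs, hs0]
  have hr36 : (3.6:ℝ) < Real.sqrt 13 := by
    nlinarith [hr, hr0]
  nlinarith [hkey, hs17, hr36]
end
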